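/- For any finite abstract simplicial complex G, the Gauss-Bonnet formula Σ_x K⁺(x) = χ(G) holds, where K⁺(x) = (-1)^{dim(x)}(1 - χ(S(x))) and S(x) is the unit sphere of the face x in the barycentric refinement graph G₁. -/

import Mathlib

open Finset Matrix

/-- The connection matrix `L' = 1 + A'` of a finite abstract simplicial complex `G`:
`L'_{xy} = 1` iff the faces `x` and `y` intersect (in particular `L'_{xx} = 1`). -/
def connMat {V : Type*} [DecidableEq V] (G : Finset (Finset V)) :
    Matrix G G ℚ := fun x y =>
  if ((x : Finset V) ∩ (y : Finset V)).Nonempty then 1 else 0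

/-- Euler characteristic `χ(G) = ∑_x (-1)^{dim x}` with `dim x = card x - 1`. -/
def eulerChar {V : Type*} [DecidableEq V] (G : Finset (Finset V)) : ℚ :=
  ∑ x ∈ G, (-1 : ℚ) ^ (x.card - 1)

/-- The Euler characteristic of the clique complex of the graph on the collection `S`
of faces in which two faces are adjacent iff one strictly contains the other:
cliques are the nonempty chains in `S`. -/
def chainChi {V : Type*} [DecidableEq V] (S : Finset (Finset V)) : ℚ :=
  ∑ c ∈ S.powerset.filter
      (fun c => c.Nonempty ∧ ∀ y ∈ c, ∀ z ∈ c, y ⊆ z ∨ z ⊆ y),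
    (-1 : ℚ) ^ (c.card - 1)

/-- The Euler characteristic of the unit sphere `S(x)` of the face `x` in the
barycentric refinement graph `G₁` (neighbors of `x`: faces comparable to `x`). -/
def sphereChi {V : Type*} [DecidableEq V] (G : Finset (Finset V)) (x : Finset V) : ℚ :=
  chainChi (G.filter (fun y => y ⊂ x ∨ x ⊂ y))

/-- The unstable curvature `K⁺(x) = (-1)^{dim x} (1 - χ(S(x)))`. -/
def Kplus {V : Type*} [DecidableEq V] (G : Finset (Finset V)) (x : Finset V) : ℚ :=
  (-1 : ℚ) ^ (x.card - 1) * (1 - sphereChi G x)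

/-!
For a finite poset `S` let `σ(S) = ∑ (-1)^|c|`, summed over all chains `c ⊆ S` including the empty
one, so that the clique complex of the comparability graph on `S` has Euler characteristic
`1 - σ(S)`. Sorting the nonempty chains by their top, resp. bottom, element gives
`σ(S) = 1 - ∑ₘ σ(S_{<m}) = 1 - ∑ₘ σ(S_{>m})`, and `σ(L ∪ U) = σ(L) σ(U)` when every element of `L`
lies below every element of `U`. The unit sphere of a face `x` in `G₁` is such a union of the
boundary of the simplex `x`, where `σ = (-1)^{dim x}`, and of the faces above `x`; hence
`K⁺(x) = σ(G_{>x})` and `∑ₓ K⁺(x) = 1 - σ(G) = ∑ₓ σ(G_{<x}) = ∑ₓ (-1)^{dim x} = χ(G)`.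
-/

open OrderDual

lemma neg_one_pow_sub_one {R : Type*} [Ring R] {k : ℕ} (hk : 0 < k) :
    (-1 : R) ^ (k - 1) = -(-1) ^ k := by
  obtain ⟨n, rfl⟩ := Nat.exists_eq_add_of_lt hk
  simp [pow_succ]

namespace Finset

variable {α β : Type*} [PartialOrder α] [PartialOrder β]

open Classical in
noncomputable def chains (S : Finset α) : Finset (Finset α) :=
  S.powerset.filter fun c => IsChain (· ≤ ·) (c : Set α)

noncomputable def signedChainCount (S : Finset α) : ℚ :=
  ∑ c ∈ S.chains, (-1) ^ #c

variable {S L U b c : Finset α}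

@[simp]
lemma mem_chains : c ∈ S.chains ↔ c ⊆ S ∧ IsChain (· ≤ ·) (c : Set α) := by
  classical
  simp [chains]

lemma empty_mem_chains (S : Finset α) : ∅ ∈ S.chains := by simp

lemma map_mem_chains_of_antitone (f : α ↪ β) (hf : Antitone f) (hc : c ∈ S.chains) :
    c.map f ∈ (S.map f).chains := by
  rw [mem_chains] at hc ⊢
  refine ⟨map_subset_map.2 hc.1, ?_⟩
  rw [coe_map]
  exact IsChain.image_of_map_rel _ _ _ (fun _ _ h => hf h) hc.2.symm

lemma signedChainCount_map_toDual (S : Finset α) :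
    (S.map toDual.toEmbedding).signedChainCount = S.signedChainCount := by
  refine sum_nbij' (fun c => c.map ofDual.toEmbedding) (fun c => c.map toDual.toEmbedding)
    (fun c hc => ?_) (fun c hc => map_mem_chains_of_antitone toDual.toEmbedding (fun _ _ h => h) hc)
    (fun c _ => by simp [map_map]) (fun c _ => by simp [map_map]) (fun c _ => by simp)
  simpa [map_map] using map_mem_chains_of_antitone ofDual.toEmbedding (fun _ _ h => h) hc

lemma Nonempty.exists_isGreatest_of_isChain (hne : c.Nonempty)
    (hc : IsChain (· ≤ ·) (c : Set α)) : ∃ m, IsGreatest (c : Set α) m := by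
  obtain ⟨m, hm⟩ := c.exists_maximal hne
  exact ⟨m, hm.prop, fun y hy => (hc.total hy hm.prop).elim id (hm.2 hy)⟩

lemma forall_lt_of_mem_chains_filter_lt [DecidableLT α] {m : α}
    (hb : b ∈ (S.filter (· < m)).chains) : ∀ y ∈ b, y < m :=
  fun _ hy => (mem_filter.1 ((mem_chains.1 hb).1 hy)).2

variable [DecidableEq α]

lemma signedChainCount_union_of_forall_lt (hLU : ∀ l ∈ L, ∀ u ∈ U, l < u) :
    (L ∪ U).signedChainCount = L.signedChainCount * U.signedChainCount := by
  have hd : Disjoint L U := disjoint_left.2 fun x hxL hxU => (hLU x hxL x hxU).ne rfl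
  rw [signedChainCount, signedChainCount, signedChainCount, sum_mul_sum, ← sum_product']
  refine sum_nbij' (fun c => (c ∩ L, c ∩ U)) (fun p => p.1 ∪ p.2) (fun c hc => ?_) (fun p hp => ?_)
    (fun c hc => ?_) (fun p hp => ?_) (fun c hc => ?_)
  · obtain ⟨hcS, hch⟩ := mem_chains.1 hc
    exact mem_product.2
      ⟨mem_chains.2 ⟨inter_subset_right, hch.mono (coe_subset.2 inter_subset_left)⟩,
        mem_chains.2 ⟨inter_subset_right, hch.mono (coe_subset.2 inter_subset_left)⟩⟩
  · obtain ⟨⟨hsL, hchL⟩, ⟨hsU, hchU⟩⟩ := (mem_product.1 hp).imp mem_chains.1 mem_chains.1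
    refine mem_chains.2 ⟨union_subset_union hsL hsU, ?_⟩
    rw [coe_union]
    exact isChain_union.2 ⟨hchL, hchU, fun a ha b hb _ => Or.inl (hLU a (hsL ha) b (hsU hb)).le⟩
  · rw [← inter_union_distrib_left, inter_eq_left.2 (mem_chains.1 hc).1]
  · obtain ⟨⟨hsL, -⟩, ⟨hsU, -⟩⟩ := (mem_product.1 hp).imp mem_chains.1 mem_chains.1
    refine Prod.ext ?_ ?_ <;> dsimp only <;> rw [union_inter_distrib_right]
    · rw [inter_eq_left.2 hsL, disjoint_iff_inter_eq_empty.1 (hd.symm.mono_left hsU), union_empty]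
    · rw [inter_eq_left.2 hsU, disjoint_iff_inter_eq_empty.1 (hd.mono_left hsL), empty_union]
  · dsimp only
    rw [← pow_add, ← card_union_of_disjoint (hd.mono inter_subset_right inter_subset_right),
      ← inter_union_distrib_left, inter_eq_left.2 (mem_chains.1 hc).1]

lemma eq_and_eq_of_insert_eq_insert_of_forall_lt {m m' : α} {b b' : Finset α}
    (hb : ∀ y ∈ b, y < m) (hb' : ∀ y ∈ b', y < m') (h : insert m b = insert m' b') :
    m = m' ∧ b = b' := by
  have hm : m = m' := by
    rcases mem_insert.1 (h ▸ mem_insert_self m b) with hm | hm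
    · exact hm
    rcases mem_insert.1 (h ▸ mem_insert_self m' b' : m' ∈ insert m b) with hm' | hm'
    · exact hm'.symm
    exact absurd (hb' m hm) (hb m' hm').asymm
  subst hm
  refine ⟨rfl, ?_⟩
  rw [← erase_insert fun h => (hb m h).ne rfl, ← erase_insert fun h => (hb' m h).ne rfl, h]

variable [DecidableLT α]

lemma insert_mem_chains {m : α} (hm : m ∈ S) (hb : b ∈ (S.filter (· < m)).chains) :
    insert m b ∈ S.chains := by
  have hlt := forall_lt_of_mem_chains_filter_lt hb
  rw [mem_chains] at hb ⊢
  refine ⟨insert_subset hm fun y hy => (mem_filter.1 (hb.1 hy)).1, ?_⟩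
  rw [coe_insert]
  exact hb.2.insert fun y hy _ => Or.inr (hlt y hy).le

lemma signedChainCount_eq_one_sub_sum_lt (S : Finset α) :
    S.signedChainCount = 1 - ∑ m ∈ S, (S.filter (· < m)).signedChainCount := by
  have hsplit : S.signedChainCount = 1 + ∑ c ∈ S.chains.erase ∅, (-1) ^ #c := by
    rw [signedChainCount, ← add_sum_erase _ _ (empty_mem_chains S), card_empty, pow_zero]
  have hfib : ∑ c ∈ S.chains.erase ∅, (-1 : ℚ) ^ #c
      = ∑ m ∈ S, ∑ b ∈ (S.filter (· < m)).chains, -(-1) ^ #b := by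
    rw [sum_sigma']
    refine (sum_bij (fun p _ => insert p.1 p.2) (fun p hp => ?_) (fun p hp q hq hpq => ?_)
      (fun c hc => ?_) (fun p hp => ?_)).symm
    · rw [mem_sigma] at hp
      exact mem_erase.2 ⟨insert_ne_empty _ _, insert_mem_chains hp.1 hp.2⟩
    · rw [mem_sigma] at hp hq
      obtain ⟨h1, h2⟩ := eq_and_eq_of_insert_eq_insert_of_forall_lt
        (forall_lt_of_mem_chains_filter_lt hp.2) (forall_lt_of_mem_chains_filter_lt hq.2) hpq
      exact Sigma.ext h1 (heq_of_eq h2)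
    · obtain ⟨hne, hc⟩ := mem_erase.1 hc
      obtain ⟨hcS, hch⟩ := mem_chains.1 hc
      obtain ⟨m, hm, htop⟩ := (nonempty_iff_ne_empty.2 hne).exists_isGreatest_of_isChain hch
      refine ⟨⟨m, c.erase m⟩, mem_sigma.2 ⟨hcS hm, mem_chains.2 ⟨fun y hy => ?_, ?_⟩⟩,
        insert_erase hm⟩
      · obtain ⟨hym, hy⟩ := mem_erase.1 hy
        exact mem_filter.2 ⟨hcS hy, lt_of_le_of_ne (htop hy) hym⟩
      · exact hch.mono (coe_subset.2 (erase_subset _ _))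
    · have hm : p.1 ∉ p.2 := fun h =>
        (forall_lt_of_mem_chains_filter_lt (mem_sigma.1 hp).2 _ h).ne rfl
      rw [card_insert_of_notMem hm, pow_succ, mul_neg_one]
  rw [hsplit, hfib]
  simp only [sum_neg_distrib, signedChainCount]
  ring

lemma signedChainCount_eq_one_sub_sum_gt (S : Finset α) :
    S.signedChainCount = 1 - ∑ m ∈ S, (S.filter (m < ·)).signedChainCount := by
  have h := signedChainCount_eq_one_sub_sum_lt (S.map toDual.toEmbedding)
  simp only [signedChainCount_map_toDual, sum_map, filter_map] at h
  convert h using 4 with m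
  exact filter_congr fun _ _ => Iff.rfl

end Finset

section SimplicialComplex

variable {V : Type*} [DecidableEq V]

lemma chainChi_eq_one_sub_signedChainCount (S : Finset (Finset V)) :
    chainChi S = 1 - S.signedChainCount := by
  have hchains : S.powerset.filter (fun c => c.Nonempty ∧ ∀ y ∈ c, ∀ z ∈ c, y ⊆ z ∨ z ⊆ y)
      = S.chains.erase ∅ := by
    ext c
    have hchain : (∀ y ∈ c, ∀ z ∈ c, y ⊆ z ∨ z ⊆ y) ↔ IsChain (· ≤ ·) (c : Set (Finset V)) :=
      ⟨fun h y hy z hz _ => h y hy z hz, fun h y hy z hz => h.total hy hz⟩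
    simp only [mem_filter, mem_powerset, mem_erase, mem_chains, nonempty_iff_ne_empty, hchain]
    tauto
  rw [chainChi, hchains, signedChainCount, ← add_sum_erase _ _ (empty_mem_chains S),
    card_empty, pow_zero, sub_add_cancel_left, ← sum_neg_distrib]
  exact sum_congr rfl fun c hc =>
    neg_one_pow_sub_one (card_pos.2 (nonempty_iff_ne_empty.2 (mem_erase.1 hc).1))

lemma sum_ssubsets_erase_empty_neg_one_pow_card {x : Finset V} (hx : x.Nonempty) :
    ∑ t ∈ x.ssubsets.erase ∅, (-1 : ℚ) ^ #t = -1 - (-1) ^ #x := by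
  have hpow : ∑ t ∈ x.powerset, (-1 : ℚ) ^ #t = 0 := by
    exact_mod_cast sum_powerset_neg_one_pow_card_of_nonempty hx
  have htop : ∑ t ∈ x.powerset, (-1 : ℚ) ^ #t = (-1) ^ #x + ∑ t ∈ x.ssubsets, (-1) ^ #t :=
    (add_sum_erase _ _ (mem_powerset_self x)).symm
  have hbot : ∑ t ∈ x.ssubsets, (-1 : ℚ) ^ #t = 1 + ∑ t ∈ x.ssubsets.erase ∅, (-1) ^ #t := by
    rw [← add_sum_erase _ _ (empty_mem_ssubsets hx), card_empty, pow_zero]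
  linarith

lemma signedChainCount_ssubsets_erase_empty {x : Finset V} (hx : x.Nonempty) :
    (x.ssubsets.erase ∅).signedChainCount = (-1) ^ (#x - 1) := by
  induction x using Finset.strongInduction with
  | H x ih =>
    have hfilter : ∀ t ∈ x.ssubsets.erase ∅,
        (x.ssubsets.erase ∅).filter (· < t) = t.ssubsets.erase ∅ := by
      intro t ht
      ext s
      simp only [mem_filter, mem_erase, mem_ssubsets]
      have htx := mem_ssubsets.1 (mem_erase.1 ht).2
      exact ⟨fun h => ⟨h.1.1, h.2⟩, fun h => ⟨⟨h.1, h.2.trans htx⟩, h.2⟩⟩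
    have hface : ∀ t ∈ x.ssubsets.erase ∅,
        ((x.ssubsets.erase ∅).filter (· < t)).signedChainCount = -(-1) ^ #t := by
      intro t ht
      obtain ⟨hne, hlt⟩ := mem_erase.1 ht
      have htne := nonempty_iff_ne_empty.2 hne
      rw [hfilter t ht, ih t (mem_ssubsets.1 hlt) htne, neg_one_pow_sub_one (card_pos.2 htne)]
    rw [signedChainCount_eq_one_sub_sum_lt, sum_congr rfl hface, sum_neg_distrib,
      sum_ssubsets_erase_empty_neg_one_pow_card hx, neg_one_pow_sub_one (card_pos.2 hx)]
    ring

lemma signedChainCount_filter_ssubset {G : Finset (Finset V)} (hne : ∀ x ∈ G, x.Nonempty)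
    (hsub : ∀ x ∈ G, ∀ y : Finset V, y ⊆ x → y.Nonempty → y ∈ G) {x : Finset V} (hx : x ∈ G) :
    (G.filter (· ⊂ x)).signedChainCount = (-1) ^ (#x - 1) := by
  have hfaces : G.filter (· ⊂ x) = x.ssubsets.erase ∅ := by
    ext y
    simp only [mem_filter, mem_erase, mem_ssubsets, ← nonempty_iff_ne_empty]
    exact ⟨fun h => ⟨hne y h.1, h.2⟩, fun h => ⟨hsub x hx y h.2.subset h.1, h.2⟩⟩
  rw [hfaces, signedChainCount_ssubsets_erase_empty (hne x hx)]

lemma Kplus_eq_signedChainCount_filter_ssuperset {G : Finset (Finset V)}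
    (hne : ∀ x ∈ G, x.Nonempty) (hsub : ∀ x ∈ G, ∀ y : Finset V, y ⊆ x → y.Nonempty → y ∈ G)
    {x : Finset V} (hx : x ∈ G) :
    Kplus G x = (G.filter (x ⊂ ·)).signedChainCount := by
  have hsphere : G.filter (fun y => y ⊂ x ∨ x ⊂ y) = G.filter (· ⊂ x) ∪ G.filter (x ⊂ ·) :=
    filter_or _ _ _
  have hjoin := signedChainCount_union_of_forall_lt (L := G.filter (· ⊂ x)) (U := G.filter (x ⊂ ·))
    fun l hl u hu => (mem_filter.1 hl).2.trans (mem_filter.1 hu).2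
  rw [Kplus, sphereChi, hsphere, chainChi_eq_one_sub_signedChainCount, hjoin,
    signedChainCount_filter_ssubset hne hsub hx, sub_sub_cancel, ← mul_assoc, ← pow_add,
    Even.neg_one_pow ⟨_, rfl⟩, one_mul]

end SimplicialComplex

/-- Gauss-Bonnet `∑_x K⁺(x) = χ(G)` for any finite abstract
simplicial complex `G`. -/
theorem gaussBonnet_Kplus {V : Type*} [DecidableEq V]
    (G : Finset (Finset V))
    (hne : ∀ x ∈ G, x.Nonempty)
    (hsub : ∀ x ∈ G, ∀ y : Finset V, y ⊆ x → y.Nonempty → y ∈ G) :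
    ∑ x ∈ G, Kplus G x = eulerChar G := by
  calc ∑ x ∈ G, Kplus G x = ∑ x ∈ G, (G.filter (x ⊂ ·)).signedChainCount :=
        sum_congr rfl fun x hx => Kplus_eq_signedChainCount_filter_ssuperset hne hsub hx
    _ = 1 - G.signedChainCount := by rw [signedChainCount_eq_one_sub_sum_gt G]; ring
    _ = ∑ x ∈ G, (G.filter (· ⊂ x)).signedChainCount := by
        rw [signedChainCount_eq_one_sub_sum_lt G]; ring
    _ = eulerChar G := sum_congr rfl fun x hx => signedChainCount_filter_ssubset hne hsub hx
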